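/- arXiv:2012.00499 — 5 statements merged into one kernel-verified Lean document; each statement's English description precedes it below -/
import Mathlib

section
/- Let κ := condDistrib X T μ be the conditional distribution kernel of X given T. Then the product measure (μ.map T) × (μ.map T) assigns measure zero to the set {(t,s) : κ t ≠ κ s} if and only if the random variables T and X are independent (IndepFun T X μ). (Equivalently: X has drift, i.e. the set of pairs of times at which the conditional laws of X differ has positive (P_T × P_T) measure, if and only if T and X are not independent.) -/
open MeasureTheory ProbabilityTheory

/-- `X` has drift (the set of pairs of times at which the conditional laws of `X` given `T`
differ has positive `P_T × P_T` measure) iff `T` and `X` are not independent; equivalently,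
the set of such pairs is `P_T × P_T`-null iff `T` and `X` are independent. -/
theorem drift_iff_not_indepFun {Ω : Type*} [MeasurableSpace Ω] [StandardBorelSpace Ω]
    [Nonempty Ω] {d : ℕ} (μ : Measure Ω) [IsProbabilityMeasure μ]
    (X : Ω → Fin d → ℝ) (T : Ω → ℝ) (hX : Measurable X) (hT : Measurable T) :
    ((μ.map T).prod (μ.map T))
        {p : ℝ × ℝ | condDistrib X T μ p.1 ≠ condDistrib X T μ p.2} = 0
      ↔ IndepFun T X μ := by
  set κ := condDistrib X T μ with hκ
  set ν := μ.map T with hν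
  have hνprob : IsProbabilityMeasure ν := Measure.isProbabilityMeasure_map hT.aemeasurable
  have hcomp : ν ⊗ₘ κ = μ.map (fun ω => (T ω, X ω)) := by
    rw [hκ, hν, condDistrib, ← Measure.fst_map_prodMk hX (Y := X) (X := T)]
    exact (μ.map (fun ω => (T ω, X ω))).disintegrate _
  constructor
  · intro h
    -- a.e. constancy of κ
    have hae : ∀ᵐ p ∂(ν.prod ν), κ p.1 = κ p.2 := h
    have hae2 : ∀ᵐ t ∂ν, ∀ᵐ s ∂ν, κ t = κ s := Measure.ae_ae_of_ae_prod hae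
    have hne : (ae ν).NeBot := ae_neBot.mpr (IsProbabilityMeasure.ne_zero ν)
    obtain ⟨t₀, ht₀⟩ := hae2.exists
    have hconst : ∀ᵐ s ∂ν, κ s = κ t₀ := by
      filter_upwards [ht₀] with s hs using hs.symm
    have hκconst : κ =ᵐ[ν] Kernel.const ℝ (κ t₀) := by
      filter_upwards [hconst] with s hs using by simpa using hs
    have hprod : μ.map (fun ω => (T ω, X ω)) = ν.prod (κ t₀) := by
      rw [← hcomp, Measure.compProd_congr hκconst, Measure.compProd_const]
    have hmapX : μ.map X = κ t₀ := by
      have := congrArg (Measure.map Prod.snd) hprod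
      rw [Measure.map_map measurable_snd (hT.prodMk hX)] at this
      rw [show Measure.map Prod.snd (ν.prod (κ t₀)) = (ν.prod (κ t₀)).snd from rfl,
        Measure.snd_prod] at this
      exact this
    rw [indepFun_iff_map_prod_eq_prod_map_map hT.aemeasurable hX.aemeasurable]
    rw [hprod, hmapX]
  · intro h
    have hprod : μ.map (fun ω => (T ω, X ω)) = ν.prod (μ.map X) :=
      (indepFun_iff_map_prod_eq_prod_map_map hT.aemeasurable hX.aemeasurable).mp h
    have hκae : ∀ᵐ t ∂ν, Kernel.const ℝ (μ.map X) t = κ t := by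
      refine (condDistrib_ae_eq_of_measure_eq_compProd_of_measurable hT hX
        (κ := Kernel.const ℝ (μ.map X)) ?_).mono fun t ht => ht.symm
      rw [hprod, ← hν, Measure.compProd_const]
    have hκae' : ∀ᵐ t ∂ν, κ t = μ.map X := by
      filter_upwards [hκae] with t ht using by simpa using ht.symm
    -- the bad set is contained in a union of null product sets
    set G : Set ℝ := {t | κ t = μ.map X} with hG
    have hGc : ν Gᶜ = 0 := hκae'
    have hsub : {p : ℝ × ℝ | κ p.1 ≠ κ p.2} ⊆ (Gᶜ ×ˢ Set.univ) ∪ (Set.univ ×ˢ Gᶜ) := by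
      rintro ⟨t, s⟩ hp
      by_contra hc
      simp only [Set.mem_union, Set.mem_prod, Set.mem_univ, and_true, true_and,
        Set.mem_compl_iff, not_or, not_not] at hc
      exact hp (hc.1.trans hc.2.symm)
    refine measure_mono_null hsub ?_
    refine le_antisymm ((measure_union_le _ _).trans ?_) zero_le'
    rw [Measure.prod_prod, Measure.prod_prod, hGc]
    simp
end

section
/- Let η := condDistrib T X μ be the conditional distribution of T given X, and let κ := condDistrib Y (fun ω => (X ω, T ω)) μ be the conditional distribution of Y given the pair (X,T). Then the following are equivalent: (i) for (μ.map X)-almost every x, the product measure (η x) × (η x) assigns measure zero to the set {(t,s) : κ (x,t) ≠ κ (x,s)}; (ii) Y and T are conditionally independent given X (CondIndepFun with respect to the σ-algebra generated by X). (Equivalently: Y has conditional drift given X if and only if T and Y are not conditionally independent given X.) -/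
open MeasureTheory ProbabilityTheory Set
open scoped ENNReal

section AuxLemmas

variable {α β : Type*} [MeasurableSpace α] [MeasurableSpace β]

/-- Disintegration of the law of `(X, Z)` as the law of `X` composed with `condDistrib Z X μ`. -/
lemma aux_map_eq_compProd_condDistrib {Ω' : Type*} [MeasurableSpace Ω'] [StandardBorelSpace Ω']
    [Nonempty Ω'] (μ : Measure α) [IsFiniteMeasure μ] {X : α → β} {Z : α → Ω'}
    (hX : Measurable X) (hZ : Measurable Z) :
    μ.map (fun a => (X a, Z a)) = μ.map X ⊗ₘ condDistrib Z X μ := by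
  have : IsFiniteMeasure (μ.map (fun a => (X a, Z a))) :=
    Measure.isFiniteMeasure_map μ _
  have h := Measure.disintegrate (μ.map (fun a => (X a, Z a))) (μ.map (fun a => (X a, Z a))).condKernel
  rw [Measure.fst_map_prodMk hZ] at h
  rw [condDistrib]
  exact h.symm

/-- Disintegration of the law of `(X, (T, Y))`. -/
lemma aux_map_triple {Ω : Type*} [MeasurableSpace Ω] (μ : Measure Ω) [IsProbabilityMeasure μ]
    (X : Ω → β) (T Y : Ω → ℝ) (hX : Measurable X) (hT : Measurable T) (hY : Measurable Y) :
    μ.map (fun ω => (X ω, (T ω, Y ω)))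
      = μ.map X ⊗ₘ (condDistrib T X μ ⊗ₖ condDistrib Y (fun ω => (X ω, T ω)) μ) := by
  set η := condDistrib T X μ
  set κ := condDistrib Y (fun ω => (X ω, T ω)) μ
  have hXT : Measurable fun ω => (X ω, T ω) := hX.prodMk hT
  have hmap : μ.map (fun ω => (X ω, (T ω, Y ω)))
      = (μ.map (fun ω => ((X ω, T ω), Y ω))).map (MeasurableEquiv.prodAssoc) := by
    rw [Measure.map_map MeasurableEquiv.prodAssoc.measurable (hXT.prodMk hY)]
    rfl
  ext s hs
  rw [hmap, Measure.map_apply MeasurableEquiv.prodAssoc.measurable hs,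
    aux_map_eq_compProd_condDistrib μ hXT hY,
    Measure.compProd_apply (MeasurableEquiv.prodAssoc.measurable hs),
    aux_map_eq_compProd_condDistrib μ hX hT,
    Measure.lintegral_compProd (Kernel.measurable_kernel_prodMk_left
      (MeasurableEquiv.prodAssoc.measurable hs)),
    Measure.compProd_apply hs]
  refine lintegral_congr fun x => ?_
  rw [Kernel.compProd_apply (measurable_prodMk_left hs)]
  exact lintegral_congr fun t => rfl

/-- Two probability measures on `ℝ × ℝ` agreeing on rational lower-rectangles are equal;
here stated against a product measure. -/
lemma aux_eq_prod_of_rat (ρ : Measure (ℝ × ℝ)) [IsProbabilityMeasure ρ]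
    (μ1 μ2 : Measure ℝ) [IsProbabilityMeasure μ1] [IsProbabilityMeasure μ2]
    (h : ∀ q r : ℚ, ρ (Iic (q : ℝ) ×ˢ Iic (r : ℝ)) = μ1 (Iic (q : ℝ)) * μ2 (Iic (r : ℝ))) :
    ρ = μ1.prod μ2 := by
  have hspan : IsCountablySpanning (⋃ q : ℚ, {Iic (q : ℝ)}) := by
    refine ⟨fun n => Iic ((n : ℚ) : ℝ), fun n => mem_iUnion.2 ⟨n, rfl⟩, ?_⟩
    ext x
    simp only [mem_iUnion, mem_Iic, mem_univ, iff_true]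
    obtain ⟨n, hn⟩ := exists_nat_ge x
    exact ⟨n, by exact_mod_cast hn⟩
  have h1 : (Real.measurableSpace : MeasurableSpace ℝ)
      = MeasurableSpace.generateFrom (⋃ q : ℚ, {Iic (q : ℝ)}) :=
    BorelSpace.measurable_eq.trans Real.borel_eq_generateFrom_Iic_rat
  have hgen : (inferInstance : MeasurableSpace (ℝ × ℝ))
      = MeasurableSpace.generateFrom
        (image2 (· ×ˢ ·) (⋃ q : ℚ, {Iic (q : ℝ)}) (⋃ q : ℚ, {Iic (q : ℝ)})) := by
    rw [← generateFrom_prod_eq hspan hspan]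
    show @Prod.instMeasurableSpace ℝ ℝ _ _ = _
    rw [h1]
  refine MeasureTheory.ext_of_generate_finite _ hgen
    (Real.isPiSystem_Iic_rat.prod Real.isPiSystem_Iic_rat) ?_ ?_
  · rintro s ⟨s1, hs1, s2, hs2, rfl⟩
    simp only [mem_iUnion, mem_singleton_iff] at hs1 hs2
    obtain ⟨q, rfl⟩ := hs1
    obtain ⟨r, rfl⟩ := hs2
    rw [Measure.prod_prod, h q r]
  · simp

/-- Core measure-theoretic lemma: the pair of conditional laws agrees a.e. iff the
composition-product is the product with its second marginal. -/
lemma aux_prod_null_iff (η : Measure ℝ) [IsProbabilityMeasure η]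
    (κ : Kernel ℝ ℝ) [IsMarkovKernel κ] :
    (η.prod η) {p : ℝ × ℝ | κ p.1 ≠ κ p.2} = 0 ↔ η ⊗ₘ κ = η.prod ((η ⊗ₘ κ).snd) := by
  constructor
  · intro h
    have hae : ∀ᵐ p ∂η.prod η, κ p.1 = κ p.2 := by
      rw [ae_iff]
      exact h
    have h2 := Measure.ae_ae_of_ae_prod hae
    have : (ae η).NeBot := ae_neBot.2 (IsProbabilityMeasure.ne_zero η)
    obtain ⟨t₀, ht₀⟩ := h2.exists
    have hconst : ∀ᵐ t ∂η, κ t = (Kernel.const ℝ (κ t₀)) t := by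
      filter_upwards [ht₀] with s hs
      rw [Kernel.const_apply, hs]
    have hc : η ⊗ₘ κ = η.prod (κ t₀) := by
      rw [Measure.compProd_congr hconst, Measure.compProd_const]
    rw [hc, Measure.snd_prod]
  · intro h
    have hρ : (η ⊗ₘ κ) = (η ⊗ₘ κ).fst ⊗ₘ κ := by rw [Measure.fst_compProd]
    have h1 := eq_condKernel_of_measure_eq_compProd κ hρ
    have hρ2 : (η ⊗ₘ κ) = (η ⊗ₘ κ).fst ⊗ₘ (Kernel.const ℝ ((η ⊗ₘ κ).snd)) := by
      rw [Measure.fst_compProd, Measure.compProd_const]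
      exact h
    have h2 := eq_condKernel_of_measure_eq_compProd _ hρ2
    rw [Measure.fst_compProd] at h1 h2
    have hae : ∀ᵐ t ∂η, κ t = (η ⊗ₘ κ).snd := by
      filter_upwards [h1, h2] with t e1 e2
      rw [e1, ← e2, Kernel.const_apply]
    have hA : η {t | κ t ≠ (η ⊗ₘ κ).snd} = 0 := hae
    obtain ⟨B, hAB, hBm, hB0⟩ := exists_measurable_superset_of_null hA
    refine measure_mono_null (fun p hp => ?_)
      (?_ : η.prod η (B ×ˢ univ ∪ univ ×ˢ B) = 0)
    · by_cases h1 : κ p.1 = (η ⊗ₘ κ).snd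
      · right
        refine ⟨trivial, hAB fun h2 => hp ?_⟩
        rw [h1, h2]
      · left
        exact ⟨hAB h1, trivial⟩
    · refine measure_union_null ?_ ?_ <;> rw [Measure.prod_prod] <;> simp [hB0]

end AuxLemmas

/-- `Y` has no conditional drift given `X` (for `μ.map X`-a.e. `x`, the set of pairs of
times at which the conditional laws of `Y` given `(X,T) = (x,·)` differ is null w.r.t. the
product of the conditional law of `T` given `X = x` with itself) iff `Y` and `T` are
conditionally independent given `X`. -/
theorem conditional_drift_iff_not_condIndepFun {Ω : Type*} [MeasurableSpace Ω]
    [StandardBorelSpace Ω] [Nonempty Ω] {d : ℕ} (μ : Measure Ω) [IsProbabilityMeasure μ]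
    (X : Ω → Fin d → ℝ) (Y : Ω → ℝ) (T : Ω → ℝ)
    (hX : Measurable X) (hY : Measurable Y) (hT : Measurable T) :
    (∀ᵐ x ∂(μ.map X),
        ((condDistrib T X μ x).prod (condDistrib T X μ x))
          {p : ℝ × ℝ |
            condDistrib Y (fun ω => (X ω, T ω)) μ (x, p.1)
              ≠ condDistrib Y (fun ω => (X ω, T ω)) μ (x, p.2)} = 0)
      ↔ CondIndepFun (MeasurableSpace.comap X inferInstance) hX.comap_le Y T μ := by
  set η := condDistrib T X μ with hηdef
  set κ := condDistrib Y (fun ω => (X ω, T ω)) μ with hκdef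
  set ξ := condDistrib (fun ω => (T ω, Y ω)) X μ with hξdef
  have hZ : Measurable fun ω => (T ω, Y ω) := hT.prodMk hY
  -- preimage identities
  have hYT : ∀ s t : Set ℝ,
      Y ⁻¹' s ∩ T ⁻¹' t = (fun ω => (T ω, Y ω)) ⁻¹' (t ×ˢ s) := by
    intro s t; ext ω; simp [and_comm]
  have hY' : ∀ s : Set ℝ, Y ⁻¹' s = (fun ω => (T ω, Y ω)) ⁻¹' (univ ×ˢ s) := by
    intro s; ext ω; simp
  -- disintegration of ξ
  have hA : ∀ᵐ x ∂μ.map X, (η ⊗ₖ κ) x = ξ x :=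
    (condDistrib_ae_eq_of_measure_eq_compProd X hZ.aemeasurable (κ := η ⊗ₖ κ)
      (aux_map_triple μ X T Y hX hT hY)).symm
  -- ENNReal helper
  have htr : ∀ a b c : ℝ≥0∞, a ≠ ⊤ → b ≠ ⊤ → c ≠ ⊤ →
      a.toReal = b.toReal * c.toReal → a = b * c := by
    intro a b c ha hb hc h
    rw [← ENNReal.toReal_mul] at h
    exact (ENNReal.toReal_eq_toReal_iff' ha (ENNReal.mul_ne_top hb hc)).1 h
  -- measurability of the equality sets
  have hms : ∀ (u v : Set (ℝ × ℝ)) (w : Set ℝ), MeasurableSet u → MeasurableSet v →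
      MeasurableSet w →
      MeasurableSet {x : Fin d → ℝ | ξ x u = ξ x v * η x w} := fun u v w hu hv hw =>
    measurableSet_eq_fun (Kernel.measurable_coe ξ hu)
      ((Kernel.measurable_coe ξ hv).mul (Kernel.measurable_coe η hw))
  -- the characterization of conditional independence
  have hstar : CondIndepFun (MeasurableSpace.comap X inferInstance) hX.comap_le Y T μ
      ↔ ∀ᵐ x ∂μ.map X, ξ x = (η x).prod ((ξ x).snd) := by
    rw [condIndepFun_iff_condExp_inter_preimage_eq_mul hY hT]
    constructor
    · intro h
      have key : ∀ q r : ℚ, ∀ᵐ x ∂μ.map X,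
          ξ x (Iic (q : ℝ) ×ˢ Iic (r : ℝ))
            = ξ x (univ ×ˢ Iic (r : ℝ)) * η x (Iic (q : ℝ)) := by
        intro q r
        have h1 := h (Iic (r : ℝ)) (Iic (q : ℝ)) measurableSet_Iic measurableSet_Iic
        rw [hYT, hY'] at h1
        have e1 := condDistrib_ae_eq_condExp (μ := μ) (s := Iic (q : ℝ) ×ˢ Iic (r : ℝ)) hX hZ
          (measurableSet_Iic.prod measurableSet_Iic)
        have e2 := condDistrib_ae_eq_condExp (μ := μ) (s := univ ×ˢ Iic (r : ℝ)) hX hZ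
          (MeasurableSet.univ.prod measurableSet_Iic)
        have e3 := condDistrib_ae_eq_condExp (μ := μ) hX hT
          (measurableSet_Iic : MeasurableSet (Iic (q : ℝ)))
        refine (ae_map_iff hX.aemeasurable
          (hms _ _ _ (measurableSet_Iic.prod measurableSet_Iic)
            (MeasurableSet.univ.prod measurableSet_Iic) measurableSet_Iic)).2 ?_
        filter_upwards [h1, e1, e2, e3] with ω hω he1 he2 he3
        refine htr _ _ _ (measure_ne_top _ _) (measure_ne_top _ _) (measure_ne_top _ _) ?_
        rw [← measureReal_def, ← measureReal_def, ← measureReal_def]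
        rw [he1, hω, ← he2, ← he3]
      have key' : ∀ᵐ x ∂μ.map X, ∀ q r : ℚ,
          ξ x (Iic (q : ℝ) ×ˢ Iic (r : ℝ))
            = ξ x (univ ×ˢ Iic (r : ℝ)) * η x (Iic (q : ℝ)) := by
        rw [ae_all_iff]
        intro q
        rw [ae_all_iff]
        intro r
        exact key q r
      filter_upwards [key'] with x hx
      refine aux_eq_prod_of_rat _ _ _ fun q r => ?_
      rw [hx q r, mul_comm]
      congr 1
      rw [Measure.snd_apply measurableSet_Iic]
      congr 1
      ext p
      simp
    · intro h s t hs ht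
      have e1 := condDistrib_ae_eq_condExp (μ := μ) hX hZ (ht.prod hs)
      have e2 := condDistrib_ae_eq_condExp (μ := μ) hX hZ (MeasurableSet.univ.prod hs)
      have e3 := condDistrib_ae_eq_condExp (μ := μ) hX hT ht
      have hae := ae_of_ae_map hX.aemeasurable h
      rw [hYT, hY']
      filter_upwards [e1, e2, e3, hae] with ω he1 he2 he3 hω
      rw [← he1, ← he2, ← he3, hω, measureReal_def, measureReal_def, measureReal_def, Measure.prod_prod, Measure.prod_prod, measure_univ,
        one_mul, ENNReal.toReal_mul, mul_comm]
  rw [hstar]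
  refine Filter.eventually_congr (hA.mono fun x hx => ?_)
  have hcomp : ξ x = η x ⊗ₘ (κ.comap (fun t => (x, t)) measurable_prodMk_left) := by
    rw [← hx]
    ext s hs
    rw [Kernel.compProd_apply hs, Measure.compProd_apply hs]
    refine lintegral_congr fun t => ?_
    rw [Kernel.comap_apply]
  rw [hcomp]
  have h := aux_prod_null_iff (η x) (κ.comap (fun t => (x, t)) measurable_prodMk_left)
  simpa [Kernel.comap_apply] using h
end

section
/- Drift inducing sets are monotone under inclusion: if S ⊆ Fin d is drift inducing and S ⊆ S', then S' is drift inducing. -/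
open MeasureTheory ProbabilityTheory

/-- The restriction of the feature vector `X` to the set of features `S`. -/
def featVec {Ω : Type*} {d : ℕ} (X : Ω → Fin d → ℝ) (S : Set (Fin d)) : Ω → (S → ℝ) :=
  fun ω => S.restrict (X ω)

lemma measurable_featVec {Ω : Type*} [MeasurableSpace Ω] {d : ℕ} {X : Ω → Fin d → ℝ}
    (hX : Measurable X) (S : Set (Fin d)) : Measurable (featVec X S) :=
  measurable_pi_lambda _ fun i => (measurable_pi_apply (i : Fin d)).comp hX

/-- A set of features `S` is drift inducing iff `T` and `X_{Sᶜ}` are conditionally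
independent given `X_S`. -/
def DriftInducing {Ω : Type*} [MeasurableSpace Ω] [StandardBorelSpace Ω] {d : ℕ}
    (μ : Measure Ω) [IsFiniteMeasure μ] (X : Ω → Fin d → ℝ) (hX : Measurable X)
    (T : Ω → ℝ) (S : Set (Fin d)) : Prop :=
  CondIndepFun (MeasurableSpace.comap (featVec X S) inferInstance)
    ((measurable_featVec hX S).comap_le) T (featVec X Sᶜ) μ

/-- A set of features is minimal drift inducing iff it is drift inducing and no proper
subset of it is drift inducing. -/
def MinimalDriftInducing {Ω : Type*} [MeasurableSpace Ω] [StandardBorelSpace Ω] {d : ℕ}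
    (μ : Measure Ω) [IsFiniteMeasure μ] (X : Ω → Fin d → ℝ) (hX : Measurable X)
    (T : Ω → ℝ) (S : Set (Fin d)) : Prop :=
  DriftInducing μ X hX T S ∧ ∀ S' ⊂ S, ¬ DriftInducing μ X hX T S'

/-- A feature `i` is drifting iff there is `R ⊆ Fin d \ {i}` such that `T` and `X_i`
are not conditionally independent given `X_R`. -/
def DriftingFeature {Ω : Type*} [MeasurableSpace Ω] [StandardBorelSpace Ω] {d : ℕ}
    (μ : Measure Ω) [IsFiniteMeasure μ] (X : Ω → Fin d → ℝ) (hX : Measurable X)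
    (T : Ω → ℝ) (i : Fin d) : Prop :=
  ∃ R ⊆ ({i}ᶜ : Set (Fin d)),
    ¬ CondIndepFun (MeasurableSpace.comap (featVec X R) inferInstance)
      ((measurable_featVec hX R).comap_le) T (fun ω => X ω i) μ

/-- A feature `i` is strongly drifting iff `T` and `X_i` are not conditionally
independent given `X_{R_i}` where `R_i = Fin d \ {i}`. -/
def StronglyDrifting {Ω : Type*} [MeasurableSpace Ω] [StandardBorelSpace Ω] {d : ℕ}
    (μ : Measure Ω) [IsFiniteMeasure μ] (X : Ω → Fin d → ℝ) (hX : Measurable X)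
    (T : Ω → ℝ) (i : Fin d) : Prop :=
  ¬ CondIndepFun (MeasurableSpace.comap (featVec X ({i}ᶜ : Set (Fin d))) inferInstance)
    ((measurable_featVec hX _).comap_le) T (fun ω => X ω i) μ

/-- A feature is a drift inducing feature iff it belongs to some minimal drift
inducing set. -/
def DriftInducingFeature {Ω : Type*} [MeasurableSpace Ω] [StandardBorelSpace Ω] {d : ℕ}
    (μ : Measure Ω) [IsFiniteMeasure μ] (X : Ω → Fin d → ℝ) (hX : Measurable X)
    (T : Ω → ℝ) (i : Fin d) : Prop :=
  ∃ S, MinimalDriftInducing μ X hX T S ∧ i ∈ S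

section Aux

variable {Ω : Type*} [mΩ : MeasurableSpace Ω] {μ : Measure Ω} [IsProbabilityMeasure μ]

lemma sup_eq_generateFrom_inter (𝓖 𝓑 : MeasurableSpace Ω) :
    𝓖 ⊔ 𝓑 = MeasurableSpace.generateFrom
      {t | ∃ G B, MeasurableSet[𝓖] G ∧ MeasurableSet[𝓑] B ∧ t = G ∩ B} := by
  apply le_antisymm
  · refine sup_le ?_ ?_
    · intro G hG
      exact MeasurableSpace.measurableSet_generateFrom
        ⟨G, Set.univ, hG, MeasurableSet.univ, by simp⟩
    · intro B hB
      exact MeasurableSpace.measurableSet_generateFrom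
        ⟨Set.univ, B, MeasurableSet.univ, hB, by simp⟩
  · refine MeasurableSpace.generateFrom_le ?_
    rintro t ⟨G, B, hG, hB, rfl⟩
    exact (le_sup_left (b := 𝓑) G hG).inter (le_sup_right (a := 𝓖) B hB)

lemma isPiSystem_inter_sets (𝓖 𝓑 : MeasurableSpace Ω) :
    IsPiSystem {t | ∃ G B, MeasurableSet[𝓖] G ∧ MeasurableSet[𝓑] B ∧ t = G ∩ B} := by
  rintro _ ⟨G₁, B₁, hG₁, hB₁, rfl⟩ _ ⟨G₂, B₂, hG₂, hB₂, rfl⟩ _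
  exact ⟨G₁ ∩ G₂, B₁ ∩ B₂, hG₁.inter hG₂, hB₁.inter hB₂, by
    rw [Set.inter_inter_inter_comm]⟩

lemma indicator_eq_mul_indicator_one (B : Set Ω) (h : Ω → ℝ) :
    B.indicator h = h * B.indicator (fun _ => (1 : ℝ)) := by
  funext x
  by_cases hx : x ∈ B <;> simp [hx]

lemma integrable_mul_indicator_one {h : Ω → ℝ} (hh : Integrable h μ)
    {B : Set Ω} (hB : MeasurableSet B) :
    Integrable (h * B.indicator fun _ => (1 : ℝ)) μ := by
  refine hh.mono (hh.aestronglyMeasurable.mul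
    (measurable_const.indicator hB).aestronglyMeasurable) ?_
  filter_upwards with x
  by_cases hx : x ∈ B <;> simp [hx]

end Aux

section Key

/-- Key lemma: if conditional probabilities factorize, the conditional probability of `A`
given `𝓖 ⊔ 𝓑` is the one given `𝓖`. -/
lemma condexp_sup_of_forall_mul {Ω : Type*} {𝓖 𝓑 : MeasurableSpace Ω}
    [mΩ : MeasurableSpace Ω] {μ : Measure Ω} [IsProbabilityMeasure μ]
    (h𝓖 : 𝓖 ≤ mΩ) (h𝓑 : 𝓑 ≤ mΩ)
    {A : Set Ω} (hA : MeasurableSet[mΩ] A)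
    (hmul : ∀ B, MeasurableSet[𝓑] B →
      (μ⟦A ∩ B | 𝓖⟧) =ᵐ[μ] fun ω => (μ⟦A | 𝓖⟧) ω * (μ⟦B | 𝓖⟧) ω) :
    (μ⟦A | 𝓖⟧) =ᵐ[μ] μ⟦A | 𝓖 ⊔ 𝓑⟧ := by
  have hsup : 𝓖 ⊔ 𝓑 ≤ mΩ := sup_le h𝓖 h𝓑
  have hint : Integrable (A.indicator fun _ => (1 : ℝ)) μ :=
    (integrable_const _).indicator hA
  have key : ∀ ⦃t : Set Ω⦄, MeasurableSet[𝓖 ⊔ 𝓑] t →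
      ∫ x in t, (μ⟦A | 𝓖⟧) x ∂μ = ∫ x in t, A.indicator (fun _ => (1 : ℝ)) x ∂μ := by
    refine MeasurableSpace.induction_on_inter (m := 𝓖 ⊔ 𝓑)
      (sup_eq_generateFrom_inter 𝓖 𝓑) (isPiSystem_inter_sets 𝓖 𝓑) (by simp) ?_ ?_ ?_
    · -- basic sets G ∩ B
      rintro _ ⟨G, B, hG, hB, rfl⟩
      have hGm : MeasurableSet[mΩ] G := h𝓖 _ hG
      have hBm : MeasurableSet[mΩ] B := h𝓑 _ hB
      have hABint : Integrable ((A ∩ B).indicator fun _ => (1 : ℝ)) μ :=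
        (integrable_const _).indicator (hA.inter hBm)
      have hprod : Integrable ((μ⟦A | 𝓖⟧) * B.indicator fun _ => (1 : ℝ)) μ :=
        integrable_mul_indicator_one integrable_condExp hBm
      have hBint : Integrable (B.indicator fun _ => (1 : ℝ)) μ :=
        (integrable_const _).indicator hBm
      have hL : ∫ x in G ∩ B, (μ⟦A | 𝓖⟧) x ∂μ
          = ∫ x in G, (μ⟦A | 𝓖⟧) x * (μ⟦B | 𝓖⟧) x ∂μ := by
        rw [← setIntegral_indicator hBm, indicator_eq_mul_indicator_one,
          ← setIntegral_condExp h𝓖 hprod hG]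
        refine setIntegral_congr_ae hGm ?_
        filter_upwards [condExp_mul_of_stronglyMeasurable_left stronglyMeasurable_condExp hprod hBint]
          with x hx _ using hx
      have hR : ∫ x in G ∩ B, A.indicator (fun _ => (1 : ℝ)) x ∂μ
          = ∫ x in G, (μ⟦A | 𝓖⟧) x * (μ⟦B | 𝓖⟧) x ∂μ := by
        rw [← setIntegral_indicator hBm]
        have heq : B.indicator (A.indicator fun _ => (1 : ℝ))
            = (A ∩ B).indicator fun _ => (1 : ℝ) := by
          rw [Set.indicator_indicator, Set.inter_comm]
        rw [heq, ← setIntegral_condExp h𝓖 hABint hG]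
        refine setIntegral_congr_ae hGm ?_
        filter_upwards [hmul B hB] with x hx _ using hx
      rw [hL, hR]
    · -- complements
      intro t ht hteq
      have htm : MeasurableSet[mΩ] t := hsup _ ht
      have h1 := integral_add_compl htm (integrable_condExp
        (f := A.indicator fun _ => (1 : ℝ)) (m := 𝓖) (μ := μ))
      have h2 := integral_add_compl htm hint
      have h3 : ∫ x, (μ⟦A | 𝓖⟧) x ∂μ = ∫ x, A.indicator (fun _ => (1 : ℝ)) x ∂μ :=
        integral_condExp h𝓖
      linarith
    · -- disjoint unions
      intro f hdisj hfm hfeq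
      rw [integral_iUnion (fun i => hsup _ (hfm i)) hdisj integrable_condExp.integrableOn,
        integral_iUnion (fun i => hsup _ (hfm i)) hdisj hint.integrableOn]
      exact tsum_congr fun i => hfeq i
  exact ae_eq_condExp_of_forall_setIntegral_eq hsup hint
    (fun s _ _ => integrable_condExp.integrableOn) (fun t ht _ => key ht)
    ((stronglyMeasurable_condExp (m := 𝓖) (f := A.indicator fun _ => (1 : ℝ)) (μ := μ)).mono (le_sup_left (b := 𝓑))).aestronglyMeasurable

end Key

namespace DriftAux

/-- The σ-algebra generated by the features in `S`. -/
def featSigma {Ω : Type*} {d : ℕ} (X : Ω → Fin d → ℝ) (S : Set (Fin d)) :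
    MeasurableSpace Ω :=
  MeasurableSpace.comap (featVec X S) inferInstance

lemma featSigma_le {Ω : Type*} {d : ℕ} (X : Ω → Fin d → ℝ) (S₁ S₂ S₃ : Set (Fin d))
    (h : ∀ i, i ∈ S₃ → i ∈ S₁ ∨ i ∈ S₂) [m₃ : MeasurableSpace Ω]
    (h₁ : featSigma X S₁ ≤ m₃) (h₂ : featSigma X S₂ ≤ m₃) :
    featSigma X S₃ ≤ m₃ := by
  have hfG : Measurable[featSigma X S₁] (featVec X S₁) := fun _ ht => ⟨_, ht, rfl⟩
  have hgB : Measurable[featSigma X S₂] (featVec X S₂) := fun _ ht => ⟨_, ht, rfl⟩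
  refine Measurable.comap_le (measurable_pi_lambda _ fun i => ?_)
  rcases h i i.2 with hi | hi
  · have h1 : Measurable[featSigma X S₁] fun ω => featVec X S₃ ω i :=
      (measurable_pi_apply (X := fun _ : ↥S₁ => ℝ) ⟨i.1, hi⟩).comp hfG
    exact h1.mono h₁ le_rfl
  · have h1 : Measurable[featSigma X S₂] fun ω => featVec X S₃ ω i :=
      (measurable_pi_apply (X := fun _ : ↥S₂ => ℝ) ⟨i.1, hi⟩).comp hgB
    exact h1.mono h₂ le_rfl

end DriftAux

open DriftAux in
/-- Drift inducing sets are monotone under inclusion. -/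
theorem driftInducing_mono {Ω : Type*} [MeasurableSpace Ω] [StandardBorelSpace Ω] {d : ℕ}
    (μ : Measure Ω) [IsProbabilityMeasure μ] (X : Ω → Fin d → ℝ) (hX : Measurable X)
    (T : Ω → ℝ) (hT : Measurable T) (S S' : Set (Fin d)) (hSS' : S ⊆ S')
    (hS : DriftInducing μ X hX T S) :
    DriftInducing μ X hX T S' := by
  have hf : Measurable (featVec X S) := measurable_featVec hX S
  have hf' : Measurable (featVec X S') := measurable_featVec hX S'
  have hg : Measurable (featVec X Sᶜ) := measurable_featVec hX Sᶜ
  have hg' : Measurable (featVec X S'ᶜ) := measurable_featVec hX S'ᶜ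
  have hGle : featSigma X S ≤ ‹MeasurableSpace Ω› := hf.comap_le
  have hBle : featSigma X Sᶜ ≤ ‹MeasurableSpace Ω› := hg.comap_le
  have hHle : featSigma X S' ≤ ‹MeasurableSpace Ω› := hf'.comap_le
  have hsuple : featSigma X S ⊔ featSigma X Sᶜ ≤ ‹MeasurableSpace Ω› := sup_le hGle hBle
  -- σ-algebra comparisons
  have hGH : featSigma X S ≤ featSigma X S' :=
    featSigma_le X S' S' S (fun i hi => Or.inl (hSS' hi)) (m₃ := featSigma X S') le_rfl le_rfl
  have hB'B : featSigma X S'ᶜ ≤ featSigma X Sᶜ :=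
    featSigma_le X Sᶜ Sᶜ S'ᶜ (fun i hi => Or.inl fun hmem => hi (hSS' hmem)) (m₃ := featSigma X Sᶜ) le_rfl le_rfl
  have hHsup : featSigma X S' ≤ featSigma X S ⊔ featSigma X Sᶜ :=
    featSigma_le X S Sᶜ S' (m₃ := featSigma X S ⊔ featSigma X Sᶜ)
      (fun i _ => by by_cases h : i ∈ S; exacts [Or.inl h, Or.inr h])
      le_sup_left le_sup_right
  -- the factorization hypothesis
  have hmul0 := (condIndepFun_iff_condExp_inter_preimage_eq_mul (μ := μ) hT hg).mp hS
  refine (condIndepFun_iff_condExp_inter_preimage_eq_mul (μ := μ) hT hg').mpr ?_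
  intro s t hs ht
  have hAm : MeasurableSet (T ⁻¹' s) := hT hs
  -- Step A: conditioning on 𝓖 ⊔ 𝓑 is the same as conditioning on 𝓖
  have hA' : (μ⟦T ⁻¹' s | featSigma X S⟧)
      =ᵐ[μ] μ⟦T ⁻¹' s | featSigma X S ⊔ featSigma X Sᶜ⟧ := by
    refine condexp_sup_of_forall_mul hGle hBle hAm ?_
    rintro B ⟨u, hu, rfl⟩
    exact hmul0 s u hs hu
  -- Step B: conditioning on 𝓗 is the same as conditioning on 𝓖
  have hB2 : (μ⟦T ⁻¹' s | featSigma X S'⟧) =ᵐ[μ] μ⟦T ⁻¹' s | featSigma X S⟧ := by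
    have h1 : μ[(μ⟦T ⁻¹' s | featSigma X S ⊔ featSigma X Sᶜ⟧) | featSigma X S']
        =ᵐ[μ] μ⟦T ⁻¹' s | featSigma X S'⟧ := condExp_condExp_of_le hHsup hsuple
    have h2 : μ[(μ⟦T ⁻¹' s | featSigma X S ⊔ featSigma X Sᶜ⟧) | featSigma X S']
        =ᵐ[μ] μ[(μ⟦T ⁻¹' s | featSigma X S⟧) | featSigma X S'] := condExp_congr_ae hA'.symm
    have h3 : μ[(μ⟦T ⁻¹' s | featSigma X S⟧) | featSigma X S']
        = μ⟦T ⁻¹' s | featSigma X S⟧ :=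
      condExp_of_stronglyMeasurable hHle (stronglyMeasurable_condExp.mono hGH)
        integrable_condExp
    exact h1.symm.trans (h2.trans (by rw [h3]))
  -- Step C
  have hBmemB : MeasurableSet[featSigma X Sᶜ] (featVec X S'ᶜ ⁻¹' t) := hB'B _ ⟨t, ht, rfl⟩
  have hBsup : MeasurableSet[featSigma X S ⊔ featSigma X Sᶜ] (featVec X S'ᶜ ⁻¹' t) := by
    have hle : featSigma X Sᶜ ≤ featSigma X S ⊔ featSigma X Sᶜ := le_sup_right
    exact hle _ hBmemB
  have hBm : MeasurableSet (featVec X S'ᶜ ⁻¹' t) := hBle _ hBmemB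
  have hAint : Integrable ((T ⁻¹' s).indicator fun _ => (1 : ℝ)) μ :=
    (integrable_const _).indicator hAm
  have hprod : Integrable ((μ⟦T ⁻¹' s | featSigma X S'⟧)
      * (featVec X S'ᶜ ⁻¹' t).indicator fun _ => (1 : ℝ)) μ :=
    integrable_mul_indicator_one integrable_condExp hBm
  have hBint : Integrable ((featVec X S'ᶜ ⁻¹' t).indicator fun _ => (1 : ℝ)) μ :=
    (integrable_const _).indicator hBm
  -- conditional expectation of the intersection, given 𝓖 ⊔ 𝓑
  have hinner : (μ⟦T ⁻¹' s ∩ featVec X S'ᶜ ⁻¹' t | featSigma X S ⊔ featSigma X Sᶜ⟧)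
      =ᵐ[μ] (featVec X S'ᶜ ⁻¹' t).indicator (μ⟦T ⁻¹' s | featSigma X S'⟧) := by
    have heq : (T ⁻¹' s ∩ featVec X S'ᶜ ⁻¹' t).indicator (fun _ => (1 : ℝ))
        = (featVec X S'ᶜ ⁻¹' t).indicator ((T ⁻¹' s).indicator fun _ => (1 : ℝ)) := by
      rw [Set.indicator_indicator, Set.inter_comm]
    rw [heq]
    refine (condExp_indicator hAint hBsup).trans ?_
    filter_upwards [hA'.symm.trans hB2.symm] with x hx
    by_cases hxB : x ∈ featVec X S'ᶜ ⁻¹' t <;> simp [Set.indicator, hxB, hx]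
  calc (μ⟦T ⁻¹' s ∩ featVec X S'ᶜ ⁻¹' t | featSigma X S'⟧)
      =ᵐ[μ] μ[(μ⟦T ⁻¹' s ∩ featVec X S'ᶜ ⁻¹' t | featSigma X S ⊔ featSigma X Sᶜ⟧)
          | featSigma X S'] := (condExp_condExp_of_le hHsup hsuple).symm
    _ =ᵐ[μ] μ[(μ⟦T ⁻¹' s | featSigma X S'⟧)
          * (featVec X S'ᶜ ⁻¹' t).indicator fun _ => (1 : ℝ) | featSigma X S'] := by
        refine condExp_congr_ae (hinner.trans ?_)
        rw [indicator_eq_mul_indicator_one]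
    _ =ᵐ[μ] (μ⟦T ⁻¹' s | featSigma X S'⟧) * μ⟦featVec X S'ᶜ ⁻¹' t | featSigma X S'⟧ :=
        condExp_mul_of_stronglyMeasurable_left stronglyMeasurable_condExp hprod hBint
    _ = fun ω => (μ⟦T ⁻¹' s | featSigma X S'⟧) ω
          * (μ⟦featVec X S'ᶜ ⁻¹' t | featSigma X S'⟧) ω := rfl
end

section
/- Drift inducing features are drifting: if a feature i ∈ Fin d belongs to some minimal drift inducing set, then i is drifting, i.e. there exists R ⊆ Fin d \ {i} such that T and X_i are not conditionally independent given X_R. -/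
open MeasureTheory ProbabilityTheory

lemma measurable_comap_self {α β : Type*} [mβ : MeasurableSpace β] (g : α → β) :
    @Measurable α β (mβ.comap g) _ g := fun s hs => ⟨s, hs, rfl⟩

lemma mul_indicator_one_eq {Ω : Type*} (B : Set Ω) (g : Ω → ℝ) :
    g * B.indicator (fun _ => (1:ℝ)) = B.indicator g := by
  funext ω; by_cases hω : ω ∈ B <;> simp [hω]

/-- Doob-type direction: if `A` is conditionally independent of `mB` given `m0`, then
conditioning additionally on `mB` does not change the conditional expectation of `1_A`. -/
lemma condexp_indicator_sup_eq {Ω : Type*} {m0 mB : MeasurableSpace Ω}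
    [mΩ : MeasurableSpace Ω] {μ : Measure Ω} [IsProbabilityMeasure μ]
    (hm0 : m0 ≤ mΩ) (hmB : mB ≤ mΩ)
    {A : Set Ω} (hA : MeasurableSet[mΩ] A)
    (hind : ∀ B, MeasurableSet[mB] B →
      (μ⟦A ∩ B | m0⟧) =ᵐ[μ] (μ⟦A | m0⟧) * (μ⟦B | m0⟧)) :
    μ[A.indicator (fun _ => (1:ℝ)) | m0 ⊔ mB] =ᵐ[μ] μ[A.indicator (fun _ => (1:ℝ)) | m0] := by
  have hsup : m0 ⊔ mB ≤ mΩ := sup_le hm0 hmB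
  have hf_int : Integrable (A.indicator (fun _ => (1:ℝ))) μ := (integrable_const 1).indicator hA
  have key : ∀ s, MeasurableSet[m0 ⊔ mB] s →
      ∫ x in s, (μ[A.indicator (fun _ => (1:ℝ)) | m0]) x ∂μ
        = ∫ x in s, A.indicator (fun _ => (1:ℝ)) x ∂μ := by
    have h_eq : (m0 ⊔ mB) = MeasurableSpace.generateFrom
        {t | ∃ G B, MeasurableSet[m0] G ∧ MeasurableSet[mB] B ∧ t = G ∩ B} := by
      refine le_antisymm (sup_le ?_ ?_) (MeasurableSpace.generateFrom_le ?_)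
      · exact fun t ht => MeasurableSpace.measurableSet_generateFrom
          ⟨t, Set.univ, ht, MeasurableSet.univ, (Set.inter_univ t).symm⟩
      · exact fun t ht => MeasurableSpace.measurableSet_generateFrom
          ⟨Set.univ, t, MeasurableSet.univ, ht, (Set.univ_inter t).symm⟩
      · rintro t ⟨G, B, hG, hB, rfl⟩
        exact ((le_sup_left : m0 ≤ m0 ⊔ mB) _ hG).inter ((le_sup_right : mB ≤ m0 ⊔ mB) _ hB)
    have h_pi : IsPiSystem {t | ∃ G B, MeasurableSet[m0] G ∧ MeasurableSet[mB] B ∧ t = G ∩ B} := by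
      rintro t1 ⟨G1, B1, hG1, hB1, rfl⟩ t2 ⟨G2, B2, hG2, hB2, rfl⟩ -
      exact ⟨G1 ∩ G2, B1 ∩ B2, hG1.inter hG2, hB1.inter hB2, Set.inter_inter_inter_comm _ _ _ _⟩
    refine MeasurableSpace.induction_on_inter (m := m0 ⊔ mB)
      (C := fun s _ => ∫ x in s, (μ[A.indicator (fun _ => (1:ℝ)) | m0]) x ∂μ
        = ∫ x in s, A.indicator (fun _ => (1:ℝ)) x ∂μ) h_eq h_pi ?_ ?_ ?_ ?_
    · simp
    · rintro t ⟨G, B, hG, hB, rfl⟩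
      have hGm : MeasurableSet[mΩ] G := hm0 _ hG
      have hBm : MeasurableSet[mΩ] B := hmB _ hB
      have hmul_int : Integrable ((μ[A.indicator (fun _ => (1:ℝ)) | m0])
          * B.indicator (fun _ => (1:ℝ))) μ := by
        rw [mul_indicator_one_eq]; exact integrable_condExp.indicator hBm
      calc ∫ x in G ∩ B, (μ[A.indicator (fun _ => (1:ℝ)) | m0]) x ∂μ
          = ∫ x in G, B.indicator (μ[A.indicator (fun _ => (1:ℝ)) | m0]) x ∂μ :=
            (setIntegral_indicator hBm).symm
        _ = ∫ x in G, ((μ[A.indicator (fun _ => (1:ℝ)) | m0])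
              * B.indicator (fun _ => (1:ℝ))) x ∂μ := by rw [mul_indicator_one_eq]
        _ = ∫ x in G, (μ[(μ[A.indicator (fun _ => (1:ℝ)) | m0])
              * B.indicator (fun _ => (1:ℝ)) | m0]) x ∂μ :=
            (setIntegral_condExp hm0 hmul_int hG).symm
        _ = ∫ x in G, ((μ⟦A | m0⟧) * (μ⟦B | m0⟧)) x ∂μ := by
            refine setIntegral_congr_ae hGm ?_
            filter_upwards [condExp_mul_of_stronglyMeasurable_left stronglyMeasurable_condExp hmul_int
              ((integrable_const 1).indicator hBm)] with x hx _
            exact hx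
        _ = ∫ x in G, (μ⟦A ∩ B | m0⟧) x ∂μ := by
            refine (setIntegral_congr_ae hGm ?_).symm
            filter_upwards [hind B hB] with x hx _ using hx
        _ = ∫ x in G, (A ∩ B).indicator (fun _ => (1:ℝ)) x ∂μ :=
            setIntegral_condExp hm0 ((integrable_const 1).indicator (hA.inter hBm)) hG
        _ = ∫ x in G, B.indicator (A.indicator (fun _ => (1:ℝ))) x ∂μ := by
            rw [Set.indicator_indicator, Set.inter_comm B A]
        _ = ∫ x in G ∩ B, A.indicator (fun _ => (1:ℝ)) x ∂μ := setIntegral_indicator hBm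
    · intro t ht hCt
      have htm : MeasurableSet[mΩ] t := hsup _ ht
      have h1 := integral_add_compl htm (integrable_condExp
        (f := A.indicator (fun _ => (1:ℝ))) (m := m0) (μ := μ))
      have h2 := integral_add_compl htm hf_int
      have h3 : ∫ x, (μ[A.indicator (fun _ => (1:ℝ)) | m0]) x ∂μ
          = ∫ x, A.indicator (fun _ => (1:ℝ)) x ∂μ := integral_condExp hm0
      linarith
    · intro g hdisj hmeas hC
      have hgm : ∀ n, MeasurableSet[mΩ] (g n) := fun n => hsup _ (hmeas n)
      rw [integral_iUnion hgm hdisj integrable_condExp.integrableOn,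
        integral_iUnion hgm hdisj hf_int.integrableOn]
      exact tsum_congr hC
  exact (ae_eq_condExp_of_forall_setIntegral_eq hsup hf_int
    (fun s _ _ => integrable_condExp.integrableOn) (fun s hs _ => key s hs)
    (((stronglyMeasurable_condExp (m := m0) (μ := μ)
      (f := A.indicator (fun _ => (1:ℝ)))).mono (le_sup_left (b := mB))).aestronglyMeasurable)).symm

/-- If conditioning on the larger σ-algebra `mbig ⊇ m0` does not change conditional
expectations of indicators of `mA`-sets, then `mA` is conditionally independent of any
`mN ≤ mbig` given `m0`. -/
lemma condIndep_of_condexp_eq {Ω : Type*} {m0 mbig mA mN : MeasurableSpace Ω}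
    [mΩ : MeasurableSpace Ω] [StandardBorelSpace Ω]
    {μ : Measure Ω} [IsProbabilityMeasure μ]
    (hm0 : m0 ≤ mΩ) (hbig : mbig ≤ mΩ) (h0big : m0 ≤ mbig) (hmA : mA ≤ mΩ) (hmN : mN ≤ mbig)
    (hce : ∀ A, MeasurableSet[mA] A →
      μ[A.indicator (fun _ => (1:ℝ)) | mbig] =ᵐ[μ] μ[A.indicator (fun _ => (1:ℝ)) | m0]) :
    CondIndep m0 mA mN hm0 μ := by
  rw [condIndep_iff _ _ _ hm0 hmA (hmN.trans hbig)]
  intro A H hA hH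
  have hAm : MeasurableSet[mΩ] A := hmA _ hA
  have hHm : MeasurableSet[mΩ] H := hbig _ (hmN _ hH)
  have hint : Integrable ((A ∩ H).indicator (fun _ => (1:ℝ))) μ :=
    (integrable_const 1).indicator (hAm.inter hHm)
  have hAint : Integrable (A.indicator (fun _ => (1:ℝ))) μ := (integrable_const 1).indicator hAm
  have hmul_int : Integrable ((μ[A.indicator (fun _ => (1:ℝ)) | m0])
      * H.indicator (fun _ => (1:ℝ))) μ := by
    rw [mul_indicator_one_eq]; exact integrable_condExp.indicator hHm
  calc (μ⟦A ∩ H | m0⟧)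
      =ᵐ[μ] μ[μ[(A ∩ H).indicator (fun _ => (1:ℝ)) | mbig] | m0] :=
        (condExp_condExp_of_le h0big hbig).symm
    _ =ᵐ[μ] μ[(μ[A.indicator (fun _ => (1:ℝ)) | m0]) * H.indicator (fun _ => (1:ℝ)) | m0] := by
        refine condExp_congr_ae ?_
        have h1 : (A ∩ H).indicator (fun _ => (1:ℝ))
            = H.indicator (A.indicator (fun _ => (1:ℝ))) := by
          rw [Set.indicator_indicator, Set.inter_comm H A]
        have h2 : μ[(A ∩ H).indicator (fun _ => (1:ℝ)) | mbig]
            =ᵐ[μ] H.indicator (μ[A.indicator (fun _ => (1:ℝ)) | mbig]) := by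
          rw [h1]; exact condExp_indicator hAint (hmN _ hH)
        filter_upwards [h2, hce A hA] with x hx hcex
        rw [hx, ← mul_indicator_one_eq]
        simp only [Pi.mul_apply, Set.indicator_apply]
        rw [hcex]
    _ =ᵐ[μ] (μ⟦A | m0⟧) * (μ⟦H | m0⟧) :=
        condExp_mul_of_stronglyMeasurable_left stronglyMeasurable_condExp hmul_int
          ((integrable_const 1).indicator hHm)


lemma measurable_coord_featVec {Ω : Type*} {d : ℕ}
    (X : Ω → Fin d → ℝ) {U : Set (Fin d)} {j : Fin d} (hj : j ∈ U) :
    Measurable[MeasurableSpace.comap (featVec X U) inferInstance] (fun ω => X ω j) := by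
  have h1 : Measurable[MeasurableSpace.comap (featVec X U) inferInstance] (featVec X U) :=
    measurable_comap_self _
  exact (measurable_pi_apply (⟨j, hj⟩ : U)).comp h1

lemma comap_featVec_le {Ω : Type*} {d : ℕ} (X : Ω → Fin d → ℝ) (U : Set (Fin d))
    (M : MeasurableSpace Ω)
    (h : ∀ j : U, Measurable[M] fun ω => X ω (j : Fin d)) :
    MeasurableSpace.comap (featVec X U) inferInstance ≤ M :=
  measurable_iff_comap_le.mp (measurable_pi_lambda _ h)

/-- Drift inducing features are drifting. -/
theorem driftInducingFeature_drifting {Ω : Type*} [MeasurableSpace Ω] [StandardBorelSpace Ω]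
    {d : ℕ} (μ : Measure Ω) [IsProbabilityMeasure μ] (X : Ω → Fin d → ℝ) (hX : Measurable X)
    (T : Ω → ℝ) (hT : Measurable T) (i : Fin d)
    (h : DriftInducingFeature μ X hX T i) :
    DriftingFeature μ X hX T i := by
  obtain ⟨S, ⟨hSdi, hSmin⟩, hiS⟩ := h
  refine ⟨S \ {i}, fun j hj => hj.2, fun hA' => ?_⟩
  refine hSmin (S \ {i}) (Set.sdiff_singleton_ssubset.mpr hiS) ?_
  have hXi : Measurable (fun ω => X ω i) := (measurable_pi_apply i).comp hX
  have h0le2 : MeasurableSpace.comap (featVec X (S \ {i})) inferInstance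
      ≤ MeasurableSpace.comap (featVec X S) inferInstance :=
    comap_featVec_le _ _ _ fun j => measurable_coord_featVec X j.2.1
  have heq : MeasurableSpace.comap (featVec X (S \ {i})) inferInstance
        ⊔ MeasurableSpace.comap (fun ω => X ω i) inferInstance
      = MeasurableSpace.comap (featVec X S) inferInstance := by
    refine le_antisymm
      (sup_le h0le2 (measurable_iff_comap_le.mp (measurable_coord_featVec X hiS))) ?_
    refine comap_featVec_le _ _ _ fun j => ?_
    by_cases hj : (j : Fin d) = i
    · simp only [hj]
      exact (measurable_comap_self (fun ω => X ω i)).mono le_sup_right le_rfl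
    · exact (measurable_coord_featVec X (⟨j.2, hj⟩ : (j : Fin d) ∈ S \ {i})).mono
        le_sup_left le_rfl
  have hNle : MeasurableSpace.comap (featVec X (S \ {i})ᶜ) inferInstance
      ≤ MeasurableSpace.comap (featVec X S) inferInstance
        ⊔ MeasurableSpace.comap (featVec X Sᶜ) inferInstance := by
    refine comap_featVec_le _ _ _ fun j => ?_
    by_cases hj : (j : Fin d) = i
    · simp only [hj]
      exact (measurable_coord_featVec X hiS).mono le_sup_left le_rfl
    · have hjc : (j : Fin d) ∈ Sᶜ := fun hjS => j.2 ⟨hjS, hj⟩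
      exact (measurable_coord_featVec X hjc).mono le_sup_right le_rfl
  have hcond1 := (condIndep_iff _ _ _ (measurable_featVec hX (S \ {i})).comap_le
    hT.comap_le hXi.comap_le μ).mp
    ((condIndepFun_iff_condIndep _ _ T (fun ω => X ω i) μ).mp hA')
  have hcond2 := (condIndep_iff _ _ _ (measurable_featVec hX S).comap_le
    hT.comap_le (measurable_featVec hX Sᶜ).comap_le μ).mp
    ((condIndepFun_iff_condIndep _ _ T (featVec X Sᶜ) μ).mp hSdi)
  have hce : ∀ A, MeasurableSet[MeasurableSpace.comap T inferInstance] A →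
      μ[A.indicator (fun _ => (1:ℝ)) | MeasurableSpace.comap (featVec X S) inferInstance
          ⊔ MeasurableSpace.comap (featVec X Sᶜ) inferInstance]
        =ᵐ[μ] μ[A.indicator (fun _ => (1:ℝ)) |
          MeasurableSpace.comap (featVec X (S \ {i})) inferInstance] := by
    intro A hA
    have hAm : MeasurableSet A := hT.comap_le _ hA
    have step1 : μ[A.indicator (fun _ => (1:ℝ)) |
          MeasurableSpace.comap (featVec X S) inferInstance]
        =ᵐ[μ] μ[A.indicator (fun _ => (1:ℝ)) |
          MeasurableSpace.comap (featVec X (S \ {i})) inferInstance] := by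
      have := condexp_indicator_sup_eq (measurable_featVec hX (S \ {i})).comap_le
        hXi.comap_le hAm (fun B hB => hcond1 A B hA hB)
      rwa [heq] at this
    have step2 := condexp_indicator_sup_eq (measurable_featVec hX S).comap_le
      (measurable_featVec hX Sᶜ).comap_le hAm (fun B hB => hcond2 A B hA hB)
    exact step2.trans step1
  unfold DriftInducing
  rw [condIndepFun_iff_condIndep]
  exact condIndep_of_condexp_eq (measurable_featVec hX (S \ {i})).comap_le
    (sup_le (measurable_featVec hX S).comap_le (measurable_featVec hX Sᶜ).comap_le)
    (h0le2.trans le_sup_left) hT.comap_le hNle hce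
end

section
/- A feature is strongly drift inducing if and only if it is strongly drifting: for i ∈ Fin d, i belongs to every drift inducing set if and only if T and X_i are not conditionally independent given X_{R_i}, where R_i := Fin d \ {i}. -/
open MeasureTheory ProbabilityTheory

section Auxiliary

set_option linter.unusedSectionVars false

variable {Ω : Type*} [mΩ : MeasurableSpace Ω]

lemma sup_comap_eq_generateFrom {β : Type*} [MeasurableSpace β] (m₁ : MeasurableSpace Ω)
    (g : Ω → β) :
    m₁ ⊔ MeasurableSpace.comap g inferInstance = MeasurableSpace.generateFrom
      {E | ∃ C, MeasurableSet[m₁] C ∧ ∃ t, MeasurableSet t ∧ E = C ∩ g ⁻¹' t} := by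
  apply le_antisymm
  · refine sup_le ?_ ?_
    · intro s hs
      exact MeasurableSpace.measurableSet_generateFrom
        ⟨s, hs, Set.univ, MeasurableSet.univ, by simp⟩
    · rintro s ⟨t, ht, rfl⟩
      exact MeasurableSpace.measurableSet_generateFrom
        ⟨Set.univ, MeasurableSet.univ, t, ht, by simp⟩
  · refine MeasurableSpace.generateFrom_le ?_
    rintro E ⟨C, hC, t, ht, rfl⟩
    exact MeasurableSet.inter ((le_sup_left : m₁ ≤ _) _ hC)
      ((le_sup_right : MeasurableSpace.comap g inferInstance ≤ _) _ ⟨t, ht, rfl⟩)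

lemma isPiSystem_inter_preimage {β : Type*} [MeasurableSpace β] (m₁ : MeasurableSpace Ω)
    (g : Ω → β) :
    IsPiSystem {E | ∃ C, MeasurableSet[m₁] C ∧ ∃ t, MeasurableSet t ∧ E = C ∩ g ⁻¹' t} := by
  rintro E ⟨C, hC, t, ht, rfl⟩ E' ⟨C', hC', t', ht', rfl⟩ -
  exact ⟨C ∩ C', hC.inter hC', t ∩ t', ht.inter ht', by ext ω; simp; tauto⟩

/-- Step 1: from the conditional-independence product rule, conditioning the indicator of `A`
on `m₁ ⊔ σ(g)` gives the same as conditioning on `m₁`. -/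
lemma condexp_sup_comap_eq_of_mul {m₁ : MeasurableSpace Ω} {mΩ' : MeasurableSpace Ω}
    {μ : Measure Ω} [IsProbabilityMeasure μ]
    (hm₁ : m₁ ≤ mΩ') {β : Type*} [MeasurableSpace β]
    {g : Ω → β} (hg : Measurable[mΩ'] g) {A : Set Ω} (hA : MeasurableSet[mΩ'] A)
    (h : ∀ t : Set β, MeasurableSet t →
      (μ⟦A ∩ g ⁻¹' t | m₁⟧) =ᵐ[μ] fun ω => (μ⟦A | m₁⟧) ω * (μ⟦g ⁻¹' t | m₁⟧) ω) :
    (μ⟦A | m₁ ⊔ MeasurableSpace.comap g inferInstance⟧) =ᵐ[μ] μ⟦A | m₁⟧ := by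
  have hm₃ : m₁ ⊔ MeasurableSpace.comap g inferInstance ≤ mΩ' := sup_le hm₁ hg.comap_le
  have hIA : Integrable (A.indicator (fun _ : Ω => (1:ℝ))) μ :=
    (integrable_const (1:ℝ)).indicator hA
  have key : ∀ E, MeasurableSet[m₁ ⊔ MeasurableSpace.comap g inferInstance] E →
      ∫ x in E, (μ⟦A | m₁⟧) x ∂μ = ∫ x in E, A.indicator (fun _ => (1:ℝ)) x ∂μ := by
    intro E hE
    refine MeasurableSpace.induction_on_inter (m := m₁ ⊔ MeasurableSpace.comap g inferInstance)
      (C := fun E _ => ∫ x in E, (μ⟦A | m₁⟧) x ∂μ = ∫ x in E, A.indicator (fun _ => (1:ℝ)) x ∂μ)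
      (sup_comap_eq_generateFrom m₁ g) (isPiSystem_inter_preimage m₁ g) ?_ ?_ ?_ ?_ E hE
    · simp
    · rintro E' ⟨C, hC, t, ht, rfl⟩
      have hB : MeasurableSet[mΩ'] (g ⁻¹' t) := hg ht
      have hIB : Integrable ((g ⁻¹' t).indicator (fun _ : Ω => (1:ℝ))) μ :=
        (integrable_const (1:ℝ)).indicator hB
      -- LHS
      have hIBbdd : ∀ᵐ x ∂μ, ‖(g ⁻¹' t).indicator (fun _ : Ω => (1:ℝ)) x‖ ≤ 1 := by
        refine Filter.Eventually.of_forall fun x => ?_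
        by_cases hx : x ∈ g ⁻¹' t <;> simp [Set.indicator_apply, hx]
      have hprod : Integrable (fun x => (μ⟦A | m₁⟧) x * (g ⁻¹' t).indicator (fun _ => (1:ℝ)) x) μ := by
        have := Integrable.bdd_mul (c := 1)
          (integrable_condExp (f := A.indicator (fun _ : Ω => (1:ℝ))) (m := m₁))
          ((measurable_const.indicator hB).aestronglyMeasurable) hIBbdd
        exact this.congr (Filter.Eventually.of_forall fun x => mul_comm _ _)
      have hpull : μ[(fun x => (μ⟦A | m₁⟧) x * (g ⁻¹' t).indicator (fun _ => (1:ℝ)) x) | m₁]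
          =ᵐ[μ] fun x => (μ⟦A | m₁⟧) x * (μ⟦g ⁻¹' t | m₁⟧) x :=
        condExp_mul_of_stronglyMeasurable_left stronglyMeasurable_condExp hprod hIB
      calc ∫ x in C ∩ g ⁻¹' t, (μ⟦A | m₁⟧) x ∂μ
          = ∫ x in C, (g ⁻¹' t).indicator (μ⟦A | m₁⟧) x ∂μ := (setIntegral_indicator hB).symm
        _ = ∫ x in C, (fun x => (μ⟦A | m₁⟧) x * (g ⁻¹' t).indicator (fun _ => (1:ℝ)) x) x ∂μ := by
            refine setIntegral_congr_ae (hm₁ _ hC) (Filter.Eventually.of_forall fun x _ => ?_)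
            by_cases hx : x ∈ g ⁻¹' t <;> simp [Set.indicator_apply, hx]
        _ = ∫ x in C, (μ[(fun x => (μ⟦A | m₁⟧) x * (g ⁻¹' t).indicator (fun _ => (1:ℝ)) x) | m₁]) x ∂μ :=
            (setIntegral_condExp hm₁ hprod hC).symm
        _ = ∫ x in C, (μ⟦A ∩ g ⁻¹' t | m₁⟧) x ∂μ := by
            refine setIntegral_congr_ae (hm₁ _ hC) ?_
            filter_upwards [hpull, h t ht] with x h1 h2 _
            rw [h1, ← h2]
        _ = ∫ x in C, (A ∩ g ⁻¹' t).indicator (fun _ => (1:ℝ)) x ∂μ :=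
            setIntegral_condExp hm₁ ((integrable_const (1:ℝ)).indicator (hA.inter hB)) hC
        _ = ∫ x in C ∩ (A ∩ g ⁻¹' t), (fun _ => (1:ℝ)) x ∂μ := setIntegral_indicator (hA.inter hB)
        _ = ∫ x in (C ∩ g ⁻¹' t) ∩ A, (fun _ => (1:ℝ)) x ∂μ := by
            rw [show C ∩ (A ∩ g ⁻¹' t) = (C ∩ g ⁻¹' t) ∩ A by ext ω; simp; tauto]
        _ = ∫ x in C ∩ g ⁻¹' t, A.indicator (fun _ => (1:ℝ)) x ∂μ := (setIntegral_indicator hA).symm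
    · intro E' hE' hIH
      have hE'' : MeasurableSet[mΩ'] E' := hm₃ _ hE'
      have h1 := integral_add_compl hE'' (integrable_condExp (f := A.indicator (fun _ : Ω => (1:ℝ))) (m := m₁) (μ := μ))
      have h2 := integral_add_compl hE'' hIA
      have h3 : ∫ x, (μ⟦A | m₁⟧) x ∂μ = ∫ x, A.indicator (fun _ => (1:ℝ)) x ∂μ :=
        integral_condExp hm₁
      linarith
    · intro f hdisj hmeas hIH
      have hmeas' : ∀ n, MeasurableSet[mΩ'] (f n) := fun n => hm₃ _ (hmeas n)
      rw [integral_iUnion hmeas' hdisj integrable_condExp.integrableOn,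
        integral_iUnion hmeas' hdisj hIA.integrableOn]
      exact tsum_congr hIH
  refine (ae_eq_condExp_of_forall_setIntegral_eq hm₃ hIA
    (fun s _ _ => integrable_condExp.integrableOn) (fun s hs _ => key s hs) ?_).symm
  exact ((stronglyMeasurable_condExp (m := m₁) (μ := μ)
    (f := A.indicator (fun _ : Ω => (1:ℝ)))).mono
    (le_sup_left : m₁ ≤ m₁ ⊔ MeasurableSpace.comap g inferInstance)).aestronglyMeasurable

/-- Step 2: if conditioning on `m₂ ⊔ σ(g)` is the same as conditioning on `m₂` for all
indicators of preimages of `f`, then `f` and `g` are conditionally independent given `m₂`. -/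
lemma condIndepFun_of_condexp_sup_comap_eq {m₂ : MeasurableSpace Ω} {mΩ' : MeasurableSpace Ω}
    [StandardBorelSpace Ω] {μ : Measure Ω} [IsProbabilityMeasure μ]
    (hm₂ : m₂ ≤ mΩ') {β β' : Type*} [MeasurableSpace β] [MeasurableSpace β']
    {f : Ω → β} {g : Ω → β'} (hf : Measurable[mΩ'] f) (hg : Measurable[mΩ'] g)
    (h : ∀ s : Set β, MeasurableSet s →
      (μ⟦f ⁻¹' s | m₂ ⊔ MeasurableSpace.comap g inferInstance⟧) =ᵐ[μ] μ⟦f ⁻¹' s | m₂⟧) :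
    CondIndepFun m₂ hm₂ f g μ := by
  rw [condIndepFun_iff_condExp_inter_preimage_eq_mul hf hg]
  intro s t hs ht
  have hm₄ : m₂ ⊔ MeasurableSpace.comap g inferInstance ≤ mΩ' := sup_le hm₂ hg.comap_le
  have hm₂₄ : m₂ ≤ m₂ ⊔ MeasurableSpace.comap g inferInstance := le_sup_left
  have hA : MeasurableSet (f ⁻¹' s) := hf hs
  have hB : MeasurableSet (g ⁻¹' t) := hg ht
  set IA := (f ⁻¹' s).indicator (fun _ : Ω => (1:ℝ)) with hIAdef
  set IB := (g ⁻¹' t).indicator (fun _ : Ω => (1:ℝ)) with hIBdef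
  have hIA : Integrable IA μ := (integrable_const (1:ℝ)).indicator hA
  have hIB : Integrable IB μ := (integrable_const (1:ℝ)).indicator hB
  have hind : (f ⁻¹' s ∩ g ⁻¹' t).indicator (fun _ : Ω => (1:ℝ))
      = fun ω => IB ω * IA ω := by
    ext ω
    by_cases h1 : ω ∈ f ⁻¹' s <;> by_cases h2 : ω ∈ g ⁻¹' t <;>
      simp [hIAdef, hIBdef, Set.indicator_apply, h1, h2]
  have hprodInt : Integrable (fun ω => IB ω * IA ω) μ := by
    rw [← hind]; exact (integrable_const (1:ℝ)).indicator (hA.inter hB)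
  have hIBbdd : ∀ᵐ x ∂μ, ‖IB x‖ ≤ 1 := by
    refine Filter.Eventually.of_forall fun x => ?_
    by_cases hx : x ∈ g ⁻¹' t <;> simp [hIBdef, Set.indicator_apply, hx]
  have hIBsm : StronglyMeasurable[m₂ ⊔ MeasurableSpace.comap g inferInstance] IB :=
    stronglyMeasurable_const.indicator ((le_sup_right : _ ≤ m₂ ⊔ _) _ ⟨t, ht, rfl⟩)
  -- pull out IB given m₄
  have hpull1 : μ[(fun ω => IB ω * IA ω) | m₂ ⊔ MeasurableSpace.comap g inferInstance]
      =ᵐ[μ] fun ω => IB ω * (μ⟦f ⁻¹' s | m₂ ⊔ MeasurableSpace.comap g inferInstance⟧) ω :=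
    condExp_mul_of_stronglyMeasurable_left hIBsm hprodInt hIA
  have hstep : μ[(fun ω => IB ω * IA ω) | m₂ ⊔ MeasurableSpace.comap g inferInstance]
      =ᵐ[μ] fun ω => IB ω * (μ⟦f ⁻¹' s | m₂⟧) ω := by
    filter_upwards [hpull1, h s hs] with ω h1 h2
    rw [h1, h2]
  have hIA₂sm : StronglyMeasurable[m₂] (μ⟦f ⁻¹' s | m₂⟧) := stronglyMeasurable_condExp
  have hprodInt2 : Integrable (fun ω => (μ⟦f ⁻¹' s | m₂⟧) ω * IB ω) μ := by
    have := Integrable.bdd_mul (c := 1)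
      (integrable_condExp (f := IA) (m := m₂) (μ := μ))
      (((measurable_const.indicator hB).aestronglyMeasurable)) hIBbdd
    exact this.congr (Filter.Eventually.of_forall fun x => mul_comm _ _)
  have hpull2 : μ[(fun ω => (μ⟦f ⁻¹' s | m₂⟧) ω * IB ω) | m₂]
      =ᵐ[μ] fun ω => (μ⟦f ⁻¹' s | m₂⟧) ω * (μ⟦g ⁻¹' t | m₂⟧) ω :=
    condExp_mul_of_stronglyMeasurable_left hIA₂sm hprodInt2 hIB
  calc (μ⟦f ⁻¹' s ∩ g ⁻¹' t | m₂⟧)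
      = μ[(fun ω => IB ω * IA ω) | m₂] := by rw [← hind]
    _ =ᵐ[μ] μ[μ[(fun ω => IB ω * IA ω) | m₂ ⊔ MeasurableSpace.comap g inferInstance] | m₂] :=
        (condExp_condExp_of_le hm₂₄ hm₄).symm
    _ =ᵐ[μ] μ[(fun ω => (μ⟦f ⁻¹' s | m₂⟧) ω * IB ω) | m₂] := by
        refine condExp_congr_ae ?_
        filter_upwards [hstep] with ω hω
        rw [hω, mul_comm]
    _ =ᵐ[μ] fun ω => (μ⟦f ⁻¹' s | m₂⟧) ω * (μ⟦g ⁻¹' t | m₂⟧) ω := hpull2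

variable {d : ℕ}

lemma comap_featVec_eq (X : Ω → Fin d → ℝ) (S : Set (Fin d)) :
    MeasurableSpace.comap (featVec X S) inferInstance
      = ⨆ i ∈ S, MeasurableSpace.comap (fun ω => X ω i) inferInstance := by
  have : (inferInstance : MeasurableSpace (S → ℝ))
      = ⨆ j : S, MeasurableSpace.comap (fun f : S → ℝ => f j) inferInstance := rfl
  rw [this, MeasurableSpace.comap_iSup]
  simp_rw [MeasurableSpace.comap_comp]
  have h2 : ∀ j : S, MeasurableSpace.comap ((fun f : S → ℝ => f j) ∘ featVec X S)
      inferInstance = MeasurableSpace.comap (fun ω => X ω ↑j) inferInstance := fun j => rfl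
  simp_rw [h2]
  exact iSup_subtype''  S fun i => MeasurableSpace.comap (fun ω => X ω i) inferInstance

lemma comap_featVec_union (X : Ω → Fin d → ℝ) (A B : Set (Fin d)) :
    MeasurableSpace.comap (featVec X (A ∪ B)) inferInstance
      = MeasurableSpace.comap (featVec X A) inferInstance
        ⊔ MeasurableSpace.comap (featVec X B) inferInstance := by
  rw [comap_featVec_eq, comap_featVec_eq, comap_featVec_eq, iSup_union]

lemma comap_featVec_singleton (X : Ω → Fin d → ℝ) (i : Fin d) :
    MeasurableSpace.comap (featVec X {i}) inferInstance
      = MeasurableSpace.comap (fun ω => X ω i) inferInstance := by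
  rw [comap_featVec_eq, iSup_singleton]

lemma comap_featVec_mono (X : Ω → Fin d → ℝ) {A B : Set (Fin d)} (h : A ⊆ B) :
    MeasurableSpace.comap (featVec X A) inferInstance
      ≤ MeasurableSpace.comap (featVec X B) inferInstance := by
  rw [comap_featVec_eq, comap_featVec_eq]
  exact biSup_mono h

lemma key_sigma_eq (X : Ω → Fin d → ℝ) (S : Set (Fin d)) (i : Fin d) :
    MeasurableSpace.comap (featVec X ({i}ᶜ : Set (Fin d))) inferInstance
        ⊔ MeasurableSpace.comap (fun ω => X ω i) inferInstance
      = MeasurableSpace.comap (featVec X S) inferInstance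
        ⊔ MeasurableSpace.comap (featVec X Sᶜ) inferInstance := by
  rw [← comap_featVec_singleton, ← comap_featVec_union, ← comap_featVec_union,
    Set.compl_union_self, Set.union_compl_self]

end Auxiliary

/-- A feature is strongly drift inducing iff it is strongly drifting. -/
theorem stronglyDriftInducing_iff_stronglyDrifting {Ω : Type*} [MeasurableSpace Ω]
    [StandardBorelSpace Ω] {d : ℕ} (μ : Measure Ω) [IsProbabilityMeasure μ]
    (X : Ω → Fin d → ℝ) (hX : Measurable X) (T : Ω → ℝ) (hT : Measurable T) (i : Fin d) :
    (∀ S : Set (Fin d), DriftInducing μ X hX T S → i ∈ S)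
      ↔ StronglyDrifting μ X hX T i := by
  constructor
  · -- strongly drift inducing → strongly drifting
    intro hall hci
    have hφ : Measurable (fun (x : ℝ) (_ : ((({i}ᶜ : Set (Fin d))ᶜ : Set (Fin d)) : Set (Fin d))) => x) :=
      measurable_pi_lambda _ fun _ => measurable_id
    have hfeq : featVec X (({i}ᶜ : Set (Fin d))ᶜ)
        = (fun (x : ℝ) (_ : ((({i}ᶜ : Set (Fin d))ᶜ : Set (Fin d)) : Set (Fin d))) => x)
          ∘ (fun ω => X ω i) := by
      funext ω j
      have hj : (j : Fin d) = i := by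
        have := j.2
        simpa using this
      show X ω ↑j = X ω i
      rw [hj]
    have hdi : DriftInducing μ X hX T ({i}ᶜ : Set (Fin d)) := by
      unfold DriftInducing
      rw [hfeq]
      have := hci.comp measurable_id hφ
      simpa [Function.comp_def] using this
    exact hall _ hdi rfl
  · -- strongly drifting → strongly drift inducing
    intro hsd S hDI
    by_contra hi
    apply hsd
    have hSsub : S ⊆ ({i}ᶜ : Set (Fin d)) := by
      intro j hj hji
      rw [Set.mem_singleton_iff] at hji
      exact hi (hji ▸ hj)
    have hm₁ : MeasurableSpace.comap (featVec X S) inferInstance ≤ ‹MeasurableSpace Ω› :=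
      (measurable_featVec hX S).comap_le
    have hm₂ : MeasurableSpace.comap (featVec X ({i}ᶜ : Set (Fin d))) inferInstance
        ≤ ‹MeasurableSpace Ω› := (measurable_featVec hX _).comap_le
    have hm₁₂ : MeasurableSpace.comap (featVec X S) inferInstance
        ≤ MeasurableSpace.comap (featVec X ({i}ᶜ : Set (Fin d))) inferInstance :=
      comap_featVec_mono X hSsub
    have hm₃ : MeasurableSpace.comap (featVec X S) inferInstance
        ⊔ MeasurableSpace.comap (featVec X Sᶜ) inferInstance ≤ ‹MeasurableSpace Ω› :=
      sup_le hm₁ (measurable_featVec hX Sᶜ).comap_le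
    have hσ := key_sigma_eq X S i
    have hm₂₃ : MeasurableSpace.comap (featVec X ({i}ᶜ : Set (Fin d))) inferInstance
        ≤ MeasurableSpace.comap (featVec X S) inferInstance
          ⊔ MeasurableSpace.comap (featVec X Sᶜ) inferInstance := by
      rw [← hσ]
      exact le_sup_left
    have hmul := (condIndepFun_iff_condExp_inter_preimage_eq_mul hT
      (measurable_featVec hX Sᶜ)).mp hDI
    refine condIndepFun_of_condexp_sup_comap_eq hm₂ hT ((measurable_pi_apply i).comp hX) ?_
    intro s hs
    have h1 : (μ⟦T ⁻¹' s | MeasurableSpace.comap (featVec X S) inferInstance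
          ⊔ MeasurableSpace.comap (featVec X Sᶜ) inferInstance⟧)
        =ᵐ[μ] μ⟦T ⁻¹' s | MeasurableSpace.comap (featVec X S) inferInstance⟧ :=
      condexp_sup_comap_eq_of_mul hm₁ (measurable_featVec hX Sᶜ) (hT hs)
        (fun t ht => hmul s t hs ht)
    have h2 : (μ⟦T ⁻¹' s | MeasurableSpace.comap (featVec X ({i}ᶜ : Set (Fin d))) inferInstance⟧)
        =ᵐ[μ] μ⟦T ⁻¹' s | MeasurableSpace.comap (featVec X S) inferInstance⟧ := by
      calc (μ⟦T ⁻¹' s | MeasurableSpace.comap (featVec X ({i}ᶜ : Set (Fin d))) inferInstance⟧)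
          =ᵐ[μ] μ[μ⟦T ⁻¹' s | MeasurableSpace.comap (featVec X S) inferInstance
              ⊔ MeasurableSpace.comap (featVec X Sᶜ) inferInstance⟧ |
              MeasurableSpace.comap (featVec X ({i}ᶜ : Set (Fin d))) inferInstance] :=
            (condExp_condExp_of_le hm₂₃ hm₃).symm
        _ =ᵐ[μ] μ[μ⟦T ⁻¹' s | MeasurableSpace.comap (featVec X S) inferInstance⟧ |
              MeasurableSpace.comap (featVec X ({i}ᶜ : Set (Fin d))) inferInstance] :=
            condExp_congr_ae h1
        _ = μ⟦T ⁻¹' s | MeasurableSpace.comap (featVec X S) inferInstance⟧ :=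
            condExp_of_stronglyMeasurable hm₂
              (stronglyMeasurable_condExp.mono hm₁₂) integrable_condExp
    rw [hσ]
    exact h1.trans h2.symm
end
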